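/- arXiv:1605.06631 — 2 statements merged into one kernel-verified Lean document; each statement's English description precedes it below -/
import Mathlib

section
/- For every positive integer k, the normalized Eisenstein series E_{2k} satisfies, as an identity of q-series with q replaced by −q corresponding to τ ↦ τ + 1/2: E_{2k}(τ + 1/2) = −E_{2k}(τ) + (2^{2k} + 2)·E_{2k}(2τ) − 2^{2k}·E_{2k}(4τ). Equivalently, writing E_{2k} as the q-series 1 − (4k/B_{2k})·∑_{n≥1} σ_{2k−1}(n) q^n, one has the formal power series identity E(−q) = −E(q) + (2^{2k}+2)·E(q²) − 2^{2k}·E(q⁴). -/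
/-!
Both sides are linear in `E`, and on the constant series the identity reads
`1 = -1 + (2^(2k) + 2) - 2^(2k)`, so it suffices to prove it for `∑ σₛ(n) qⁿ`, one coefficient
at a time. At odd `n` both sides are `-σₛ(n)`. At even `n` it follows from the multiplicativity
of `σₛ`, through the Hecke-type relations `σₛ(2n) = (1 + 2ˢ) σₛ(n)` for odd `n` and
`σₛ(4n) = (1 + 2ˢ) σₛ(2n) - 2ˢ σₛ(n)`.
-/

noncomputable section

/-- `substPow m f` is the power series `f(X^m)`. -/
def substPow (m : ℕ) (f : PowerSeries ℚ) : PowerSeries ℚ :=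
  PowerSeries.mk fun n => if m ∣ n then PowerSeries.coeff (n / m) f else 0

open ArithmeticFunction Finset PowerSeries
open scoped ArithmeticFunction.sigma

namespace ArithmeticFunction

theorem sigma_prime_mul_of_not_dvd {s p n : ℕ} (hp : p.Prime) (hn : ¬ p ∣ n) :
    σ s (p * n) = (1 + p ^ s) * σ s n := by
  rw [isMultiplicative_sigma.map_mul_of_coprime ((hp.coprime_iff_not_dvd).2 hn),
    ← pow_one p, sigma_apply_prime_pow hp]
  simp [sum_range_succ]

theorem sigma_prime_mul_prime_mul_add {s p : ℕ} (hp : p.Prime) (n : ℕ) :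
    σ s (p * (p * n)) + p ^ s * σ s n = (1 + p ^ s) * σ s (p * n) := by
  rcases eq_or_ne n 0 with rfl | hn
  · simp
  obtain ⟨a, u, hu, rfl⟩ := Nat.exists_eq_pow_mul_and_not_dvd hn p hp.ne_one
  have hcop (i : ℕ) : (p ^ i).Coprime u := ((hp.coprime_iff_not_dvd).2 hu).pow_left i
  have hmul (i : ℕ) : σ s (p ^ i * u) = (∑ j ∈ range (i + 1), (p ^ s) ^ j) * σ s u := by
    simp only [isMultiplicative_sigma.map_mul_of_coprime (hcop i), sigma_apply_prime_pow hp,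
      pow_mul']
  rw [show p * (p * (p ^ a * u)) = p ^ (a + 2) * u by ring,
    show p * (p ^ a * u) = p ^ (a + 1) * u by ring, hmul, hmul, hmul,
    geom_sum_succ (n := a + 2), geom_sum_succ (n := a + 1)]
  ring

theorem neg_one_pow_mul_sigma {R : Type*} [CommRing R] (s n : ℕ) :
    (-1) ^ n * (σ s n : R) = -σ s n + (2 ^ (s + 1) + 2) * (if 2 ∣ n then (σ s (n / 2) : R) else 0)
      - 2 ^ (s + 1) * (if 4 ∣ n then (σ s (n / 4) : R) else 0) := by
  obtain ⟨m, rfl | rfl⟩ := Nat.even_or_odd' n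
  · have h2 : 2 ∣ 2 * m := dvd_mul_right 2 m
    rw [if_pos h2, Nat.mul_div_cancel_left m two_pos, pow_mul, neg_one_sq, one_pow, one_mul]
    obtain ⟨j, rfl | rfl⟩ := Nat.even_or_odd' m
    · have h := congrArg (Nat.cast : ℕ → R)
        (sigma_prime_mul_prime_mul_add (s := s) Nat.prime_two j)
      rw [if_pos ⟨j, by ring⟩, show 2 * (2 * j) / 4 = j by omega]
      push_cast at h
      linear_combination 2 * h
    · have h := congrArg (Nat.cast : ℕ → R)
        (sigma_prime_mul_of_not_dvd (s := s) Nat.prime_two (n := 2 * j + 1) (by omega))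
      rw [if_neg (by omega)]
      push_cast at h
      linear_combination 2 * h
  · rw [if_neg (by omega), if_neg (by omega), pow_succ, pow_mul, neg_one_sq, one_pow]
    ring

end ArithmeticFunction

theorem coeff_substPow (m n : ℕ) (f : ℚ⟦X⟧) :
    coeff n (substPow m f) = if m ∣ n then coeff (n / m) f else 0 :=
  coeff_mk _ _

theorem substPow_one (m : ℕ) : substPow m 1 = 1 := by
  ext n
  rw [coeff_substPow]
  by_cases hmn : m ∣ n
  · obtain ⟨j, rfl⟩ := hmn
    rcases eq_or_ne m 0 with rfl | hm
    · simp
    · simp [hm, coeff_one]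
  · rw [if_neg hmn, coeff_one, if_neg (by rintro rfl; exact hmn (dvd_zero m))]

theorem substPow_add (m : ℕ) (f g : ℚ⟦X⟧) : substPow m (f + g) = substPow m f + substPow m g := by
  ext n
  simp only [coeff_substPow, map_add]
  split_ifs <;> simp

theorem substPow_smul (m : ℕ) (a : ℚ) (f : ℚ⟦X⟧) : substPow m (a • f) = a • substPow m f := by
  ext n
  simp only [coeff_substPow, map_smul]
  split_ifs <;> simp

namespace PowerSeries

theorem rescale_smul {R : Type*} [CommSemiring R] (a r : R) (f : R⟦X⟧) :
    rescale a (r • f) = r • rescale a f := by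
  ext n
  simp only [coeff_rescale, coeff_smul, smul_eq_mul]
  ring

end PowerSeries

def sigmaSeries (R : Type*) [Semiring R] (s : ℕ) : R⟦X⟧ :=
  mk fun n => (σ s n : R)

theorem rescale_neg_one_sigmaSeries (s : ℕ) :
    rescale (-1) (sigmaSeries ℚ s) = -sigmaSeries ℚ s
      + ((2 : ℚ) ^ (s + 1) + 2) • substPow 2 (sigmaSeries ℚ s)
      - (2 : ℚ) ^ (s + 1) • substPow 4 (sigmaSeries ℚ s) := by
  ext n
  simp only [coeff_rescale, map_sub, map_add, map_neg, map_smul, smul_eq_mul, coeff_substPow,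
    sigmaSeries, coeff_mk]
  exact neg_one_pow_mul_sigma (R := ℚ) s n

theorem statement10 (k : ℕ) (hk : 0 < k) (E : PowerSeries ℚ)
    (hE : E = PowerSeries.mk fun n =>
      if n = 0 then 1
      else -((4 * k : ℚ) / bernoulli (2 * k)) * ∑ d ∈ n.divisors, (d : ℚ) ^ (2 * k - 1)) :
    PowerSeries.rescale (-1 : ℚ) E =
      -E + ((2 : ℚ) ^ (2 * k) + 2) • substPow 2 E - (2 : ℚ) ^ (2 * k) • substPow 4 E := by
  set c : ℚ := -((4 * k : ℚ) / bernoulli (2 * k))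
  have hE_sigma : E = 1 + c • sigmaSeries ℚ (2 * k - 1) := by
    ext n
    rcases eq_or_ne n 0 with rfl | hn
    · simp [hE, sigmaSeries]
    · simp [hE, sigmaSeries, coeff_one, hn, sigma_apply]
  rw [hE_sigma, show (2 : ℚ) ^ (2 * k) = 2 ^ (2 * k - 1 + 1) by rw [Nat.sub_add_cancel (by omega)],
    map_add, map_one, rescale_smul, rescale_neg_one_sigmaSeries, substPow_add, substPow_add,
    substPow_smul, substPow_smul, substPow_one, substPow_one]
  module
end
end

section
/- Let p ∈ {7, 23} and k ≥ 0, and let E^∞(q) = 1 − c·∑_{n≥1} (∑_{d|n} χ_p(d) d^{2k}) q^n where c = (4k+2)/B_{2k+1,p}. Then as formal power series, E^∞(−q) = −E^∞(q) + (2^{2k+1} + 2)·E^∞(q²) − 2^{2k+1}·E^∞(q⁴). -/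
noncomputable section

instance : Fact (Nat.Prime 7) := ⟨by norm_num⟩

instance : Fact (Nat.Prime 23) := ⟨by norm_num⟩

/-- The generalized Bernoulli number `B_{k,χ_p}` attached to the Legendre symbol mod `p`,
via the classical formula `B_{k,χ} = f^{k-1} ∑_{j<f} χ(j) B_k(j/f)`. -/
def genBernoulli (p : ℕ) [Fact p.Prime] (k : ℕ) : ℚ :=
  (p : ℚ) ^ (k - 1) *
    ∑ j ∈ Finset.range p, (legendreSym p (j : ℤ) : ℚ) * (Polynomial.bernoulli k).eval ((j : ℚ) / p)

/-!
Put `f d = χ_p(d) d^{2k}` and `σ n = ∑_{d ∣ n} f d`. As `p ≡ 7 (mod 8)`, `χ_p(2) = 1`, so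
`f (2d) = t f d` with `t = 2^{2k}`. Splitting the divisors of `2m` by parity gives
`σ (2m) = (1 + t) σ m` for odd `m` and `σ (4r) = (1 + t) σ (2r) - t σ r`. Comparing coefficients
of `qⁿ` according to `n mod 4`, these two recursions are exactly the claimed identity (at odd `n`
both sides are `-eₙ`).
-/

open Finset PowerSeries

section DivisorSum

variable {R : Type*} [CommRing R] (f : ℕ → R)

theorem sum_divisors_filter_odd_two_mul (m : ℕ) :
    ∑ d ∈ (2 * m).divisors with Odd d, f d = ∑ d ∈ m.divisors with Odd d, f d := by
  congr 1
  ext d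
  simp only [mem_filter, Nat.mem_divisors, and_congr_left_iff]
  intro hd
  exact ⟨fun ⟨h, h0⟩ => ⟨(Nat.coprime_two_right.2 hd).dvd_of_dvd_mul_left h, by omega⟩,
    fun ⟨h, h0⟩ => ⟨h.mul_left 2, by omega⟩⟩

theorem sum_divisors_filter_odd_of_odd {m : ℕ} (hm : Odd m) :
    ∑ d ∈ m.divisors with Odd d, f d = ∑ d ∈ m.divisors, f d :=
  sum_congr (filter_true_of_mem fun _ hd => hm.of_dvd_nat (Nat.dvd_of_mem_divisors hd)) fun _ _ => rfl

variable {f} {t : R} (hf : ∀ d, f (2 * d) = t * f d)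
include hf

/-- The odd divisors of `2m` are those of `m`, the even ones are twice the divisors of `m`. -/
theorem sum_divisors_two_mul (m : ℕ) :
    ∑ d ∈ (2 * m).divisors, f d = ∑ d ∈ m.divisors with Odd d, f d + t * ∑ d ∈ m.divisors, f d := by
  have heven : (2 * m).divisors.filter (¬ Odd ·) = m.divisors.image (2 * ·) := by
    ext d
    simp only [mem_filter, Nat.mem_divisors, mem_image, Nat.not_odd_iff_even, even_iff_two_dvd]
    constructor
    · rintro ⟨⟨hdvd, hm⟩, e, rfl⟩
      exact ⟨e, ⟨Nat.dvd_of_mul_dvd_mul_left two_pos hdvd, by omega⟩, rfl⟩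
    · rintro ⟨e, ⟨he, hm⟩, rfl⟩
      exact ⟨⟨mul_dvd_mul_left 2 he, by omega⟩, dvd_mul_right 2 e⟩
  rw [← sum_filter_add_sum_filter_not _ Odd, sum_divisors_filter_odd_two_mul, heven,
    sum_image fun _ _ _ _ h => by omega, mul_sum]
  simp only [hf]

theorem sum_divisors_two_mul_of_odd {m : ℕ} (hm : Odd m) :
    ∑ d ∈ (2 * m).divisors, f d = (1 + t) * ∑ d ∈ m.divisors, f d := by
  rw [sum_divisors_two_mul hf, sum_divisors_filter_odd_of_odd f hm]
  ring

theorem sum_divisors_four_mul (r : ℕ) :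
    ∑ d ∈ (4 * r).divisors, f d =
      (1 + t) * ∑ d ∈ (2 * r).divisors, f d - t * ∑ d ∈ r.divisors, f d := by
  have h := sum_divisors_two_mul hf (2 * r)
  rw [sum_divisors_filter_odd_two_mul] at h
  rw [show 4 * r = 2 * (2 * r) by ring, h, sum_divisors_two_mul hf r]
  ring

end DivisorSum

theorem coeff_substPow_mul {m : ℕ} (hm : 0 < m) (n : ℕ) (f : PowerSeries ℚ) :
    coeff (m * n) (substPow m f) = coeff n f := by
  simp [substPow, Nat.mul_div_cancel_left n hm]

theorem coeff_substPow_of_not_dvd {m n : ℕ} (h : ¬ m ∣ n) (f : PowerSeries ℚ) :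
    coeff n (substPow m f) = 0 := by
  simp [substPow, h]

theorem rescale_neg_one_eq_of_coeff (t : ℚ) (E : PowerSeries ℚ)
    (h2 : ∀ m, Odd m → coeff (2 * m) E = (1 + t) * coeff m E)
    (h4 : ∀ r, coeff (4 * r) E = (1 + t) * coeff (2 * r) E - t * coeff r E) :
    rescale (-1 : ℚ) E = -E + (2 * t + 2) • substPow 2 E - (2 * t) • substPow 4 E := by
  ext n
  simp only [map_add, map_sub, map_neg, coeff_rescale, coeff_smul, smul_eq_mul]
  obtain ⟨m, rfl | rfl⟩ := Nat.even_or_odd' n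
  · obtain ⟨r, rfl | rfl⟩ := Nat.even_or_odd' m
    · rw [coeff_substPow_mul two_pos, show 2 * (2 * r) = 4 * r by ring,
        coeff_substPow_mul four_pos, h4, pow_mul]
      ring
    · rw [coeff_substPow_mul two_pos, coeff_substPow_of_not_dvd (by omega),
        h2 _ (odd_two_mul_add_one r), pow_mul]
      ring
  · rw [coeff_substPow_of_not_dvd (by omega), coeff_substPow_of_not_dvd (by omega),
      (odd_two_mul_add_one m).neg_one_pow]
    ring

theorem legendreSym_two_of_mod_eight_eq_seven (p : ℕ) [Fact p.Prime] (hp : p % 8 = 7) :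
    legendreSym p 2 = 1 := by
  rw [legendreSym.at_two (by omega), ZMod.χ₈_nat_eq_if_mod_eight]
  simp [hp, show p % 2 = 1 by omega]

theorem statement12_general (p : ℕ) [Fact p.Prime] (hp : p = 7 ∨ p = 23) (k : ℕ)
    (c : ℚ)
    (E : PowerSeries ℚ)
    (hE : E = PowerSeries.mk fun n =>
      if n = 0 then 1
      else -c * ∑ d ∈ n.divisors, (legendreSym p (d : ℤ) : ℚ) * (d : ℚ) ^ (2 * k)) :
    PowerSeries.rescale (-1 : ℚ) E =
      -E + ((2 : ℚ) ^ (2 * k + 1) + 2) • substPow 2 E - (2 : ℚ) ^ (2 * k + 1) • substPow 4 E := by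
  have hχ2 : legendreSym p 2 = 1 :=
    legendreSym_two_of_mod_eight_eq_seven p (by rcases hp with rfl | rfl <;> rfl)
  subst hE
  set f : ℕ → ℚ := fun d => (legendreSym p d : ℚ) * (d : ℚ) ^ (2 * k) with hf_def
  have hf : ∀ d, f (2 * d) = 2 ^ (2 * k) * f d := by
    intro d
    simp only [hf_def, Nat.cast_mul, Nat.cast_ofNat, legendreSym.mul, hχ2]
    push_cast
    ring
  rw [show (2 : ℚ) ^ (2 * k + 1) = 2 * 2 ^ (2 * k) by ring]
  refine rescale_neg_one_eq_of_coeff _ _ (fun m hm => ?_) (fun r => ?_)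
  · have hm0 : m ≠ 0 := hm.pos.ne'
    simp only [coeff_mk, if_neg (mul_ne_zero two_ne_zero hm0), if_neg hm0,
      sum_divisors_two_mul_of_odd hf hm]
    ring
  · rcases eq_or_ne r 0 with rfl | hr
    · simp
    · simp only [coeff_mk, if_neg (by omega : 4 * r ≠ 0), if_neg (by omega : 2 * r ≠ 0),
        if_neg hr, sum_divisors_four_mul hf]
      ring

theorem statement12 (p : ℕ) [Fact p.Prime] (hp : p = 7 ∨ p = 23) (k : ℕ)
    (c : ℚ) (hc : c = (4 * k + 2 : ℚ) / genBernoulli p (2 * k + 1))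
    (E : PowerSeries ℚ)
    (hE : E = PowerSeries.mk fun n =>
      if n = 0 then 1
      else -c * ∑ d ∈ n.divisors, (legendreSym p (d : ℤ) : ℚ) * (d : ℚ) ^ (2 * k)) :
    PowerSeries.rescale (-1 : ℚ) E =
      -E + ((2 : ℚ) ^ (2 * k + 1) + 2) • substPow 2 E - (2 : ℚ) ^ (2 * k + 1) • substPow 4 E :=
  statement12_general p hp k c E hE
end
end
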